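/- For every IMAB instance I = (f_1, …, f_k) and all N, T ∈ ℕ with T ≥ 4 and 1 ≤ N ≤ T/2, the offline optima satisfy 25T²·OPT(I,N) ≥ 16N²·OPT(I,T). -/
import Mathlib


open scoped Classical

/-- A reward function: bounded in [0,1], nondecreasing, with decreasing marginal returns. -/
def IsRewardFn (f : ℕ → ℝ) : Prop :=
  (∀ n, 0 ≤ f n) ∧ (∀ n, f n ≤ 1) ∧ Monotone f ∧
    ∀ n, 1 ≤ n → f (n + 1) - f n ≤ f n - f (n - 1)

/-- Cumulative reward from pulling an arm with reward function `f` for `N` pulls. -/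
noncomputable def Rew (f : ℕ → ℝ) (N : ℕ) : ℝ := ∑ n ∈ Finset.Icc 1 N, f n

/-- Offline optimum: the best total reward over all allocations of `T` pulls to the `k` arms. -/
noncomputable def OPT {k : ℕ} (f : Fin k → ℕ → ℝ) (T : ℕ) : ℝ :=
  sSup {x : ℝ | ∃ M : Fin k → ℕ, (∑ i, M i) = T ∧ x = ∑ i, Rew (f i) (M i)}

lemma Rew_zero (f : ℕ → ℝ) : Rew f 0 = 0 := by simp [Rew]

lemma Rew_nonneg {f : ℕ → ℝ} (hf : IsRewardFn f) (m : ℕ) : 0 ≤ Rew f m :=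
  Finset.sum_nonneg fun n _ => hf.1 n

lemma Rew_le {f : ℕ → ℝ} (hf : IsRewardFn f) (m : ℕ) : Rew f m ≤ m := by
  have h := Finset.sum_le_card_nsmul (Finset.Icc 1 m) f 1 (fun n _ => hf.2.1 n)
  simpa [Rew, Nat.card_Icc, nsmul_eq_mul] using h

lemma slope_le {f : ℕ → ℝ} (hf : IsRewardFn f) {m n : ℕ} (hm : 1 ≤ m) (hmn : m ≤ n) :
    (m : ℝ) * f n ≤ (n : ℝ) * f m := by
  set d : ℕ → ℝ := fun j => f (j + 1) - f j with hd
  have hanti : Antitone d := antitone_nat_of_succ_le (fun j => by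
    have h := hf.2.2.2 (j + 1) (by omega)
    simpa [d] using h)
  have tel : ∀ b, ∑ j ∈ Finset.range b, d j = f b - f 0 := fun b => Finset.sum_range_sub f b
  have h1 : (m : ℝ) * d (m - 1) ≤ f m - f 0 := by
    have h := Finset.card_nsmul_le_sum (Finset.range m) d (d (m - 1))
      (fun j hj => hanti (by have := Finset.mem_range.mp hj; omega))
    simpa [tel m, nsmul_eq_mul] using h
  have h2 : f n - f m ≤ ((n : ℝ) - m) * d (m - 1) := by
    have hsum : ∑ j ∈ Finset.Ico m n, d j = f n - f m := by
      rw [Finset.sum_Ico_eq_sub d hmn, tel n, tel m]; ring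
    have h := Finset.sum_le_card_nsmul (Finset.Ico m n) d (d (m - 1))
      (fun j hj => hanti (show m - 1 ≤ j by have := (Finset.mem_Ico.mp hj).1; omega))
    rw [hsum] at h
    have hcard : ((Finset.Ico m n).card : ℝ) = (n : ℝ) - m := by
      rw [Nat.card_Ico, Nat.cast_sub hmn]
    calc f n - f m ≤ ((Finset.Ico m n).card : ℝ) * d (m - 1) := by
          simpa [nsmul_eq_mul] using h
      _ = ((n : ℝ) - m) * d (m - 1) := by rw [hcard]
  have hf0 : 0 ≤ f 0 := hf.1 0
  have hmn' : (m : ℝ) ≤ n := Nat.cast_le.mpr hmn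
  have hm' : (1 : ℝ) ≤ m := by exact_mod_cast hm
  nlinarith [mul_le_mul_of_nonneg_left h2 (by positivity : (0:ℝ) ≤ (m:ℝ)),
    mul_le_mul_of_nonneg_left h1 (by linarith : (0:ℝ) ≤ (n:ℝ) - m),
    mul_nonneg (by linarith : (0:ℝ) ≤ (n:ℝ) - m) hf0]

lemma sum_Icc_cast (N : ℕ) : (∑ n ∈ Finset.Icc 1 N, (n : ℝ)) * 2 = (N : ℝ) * ((N : ℝ) + 1) := by
  induction N with
  | zero => simp
  | succ N ih =>
      rw [Finset.sum_Icc_succ_top (by omega : 1 ≤ N + 1)]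
      push_cast
      push_cast at ih
      nlinarith [ih]

lemma rew_ratio {f : ℕ → ℝ} (hf : IsRewardFn f) {N T : ℕ} (hN : 1 ≤ N) (hNT : N ≤ T) :
    (N : ℝ) * ((N : ℝ) + 1) * Rew f T ≤ (T : ℝ) * ((T : ℝ) + 1) * Rew f N := by
  have hsplit : Rew f T = Rew f N + ∑ n ∈ Finset.Ico (N + 1) (T + 1), f n := by
    unfold Rew
    rw [← Finset.Ico_add_one_right_eq_Icc 1 T, ← Finset.Ico_add_one_right_eq_Icc 1 N,
      ← Finset.sum_Ico_consecutive f (by omega : 1 ≤ N + 1) (by omega : N + 1 ≤ T + 1)]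
  set S := ∑ n ∈ Finset.Ico (N + 1) (T + 1), (n : ℝ) with hSdef
  have hS : S * 2 = (T : ℝ) * ((T : ℝ) + 1) - (N : ℝ) * ((N : ℝ) + 1) := by
    have h1 := sum_Icc_cast T
    have h2 := sum_Icc_cast N
    have h3 : (∑ n ∈ Finset.Icc 1 N, (n : ℝ)) + S = ∑ n ∈ Finset.Icc 1 T, (n : ℝ) := by
      rw [hSdef, ← Finset.Ico_add_one_right_eq_Icc 1 T, ← Finset.Ico_add_one_right_eq_Icc 1 N]
      exact Finset.sum_Ico_consecutive _ (by omega) (by omega)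
    linarith
  have hS0 : 0 ≤ S := Finset.sum_nonneg fun n _ => by positivity
  have hA : (N : ℝ) * (∑ n ∈ Finset.Ico (N + 1) (T + 1), f n) ≤ S * f N := by
    rw [Finset.mul_sum, hSdef, Finset.sum_mul]
    refine Finset.sum_le_sum fun n hn => ?_
    exact slope_le hf hN (by have := (Finset.mem_Ico.mp hn).1; omega)
  have hNpos : (0 : ℝ) < N := by exact_mod_cast hN
  have hB' : ((N : ℝ) + 1) * f N ≤ 2 * Rew f N := by
    have hpt : ∀ n ∈ Finset.Icc 1 N, (n : ℝ) * f N ≤ (N : ℝ) * f n := fun n hn =>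
      slope_le hf (Finset.mem_Icc.mp hn).1 (Finset.mem_Icc.mp hn).2
    have hsum : (∑ n ∈ Finset.Icc 1 N, (n : ℝ)) * f N ≤ (N : ℝ) * Rew f N := by
      rw [Finset.sum_mul]
      unfold Rew
      rw [Finset.mul_sum]
      exact Finset.sum_le_sum hpt
    have hg := sum_Icc_cast N
    have hB : (N : ℝ) * (((N : ℝ) + 1) * f N) ≤ (N : ℝ) * (2 * Rew f N) := by
      calc (N : ℝ) * (((N : ℝ) + 1) * f N)
          = ((∑ n ∈ Finset.Icc 1 N, (n : ℝ)) * 2) * f N := by rw [hg]; ring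
        _ = 2 * ((∑ n ∈ Finset.Icc 1 N, (n : ℝ)) * f N) := by ring
        _ ≤ 2 * ((N : ℝ) * Rew f N) := by linarith
        _ = (N : ℝ) * (2 * Rew f N) := by ring
    exact le_of_mul_le_mul_left hB hNpos
  have hRewN : 0 ≤ Rew f N := Rew_nonneg hf N
  have hkey : S * (2 * Rew f N) = ((T : ℝ) * ((T : ℝ) + 1) - (N : ℝ) * ((N : ℝ) + 1)) * Rew f N := by
    rw [← hS]; ring
  rw [hsplit]
  have hint1 := mul_le_mul_of_nonneg_left hA (by positivity : (0:ℝ) ≤ (N : ℝ) + 1)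
  have hint2 := mul_le_mul_of_nonneg_left hB' hS0
  nlinarith [hint1, hint2, hkey]

lemma rew_avg {f : ℕ → ℝ} (hf : IsRewardFn f) {m T : ℕ} (hmT : m ≤ T) :
    (T : ℝ) * Rew f m ≤ (m : ℝ) * Rew f T := by
  rcases Nat.eq_zero_or_pos m with h0 | hm
  · subst h0; simp [Rew_zero]
  have hsplit : Rew f T = Rew f m + ∑ n ∈ Finset.Ico (m + 1) (T + 1), f n := by
    unfold Rew
    rw [← Finset.Ico_add_one_right_eq_Icc 1 T, ← Finset.Ico_add_one_right_eq_Icc 1 m,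
      ← Finset.sum_Ico_consecutive f (by omega : 1 ≤ m + 1) (by omega : m + 1 ≤ T + 1)]
  have h1 : Rew f m ≤ (m : ℝ) * f m := by
    have h := Finset.sum_le_card_nsmul (Finset.Icc 1 m) f (f m)
      (fun n hn => hf.2.2.1 (Finset.mem_Icc.mp hn).2)
    simpa [Rew, Nat.card_Icc, nsmul_eq_mul] using h
  have h2 : ((T : ℝ) - m) * f m ≤ ∑ n ∈ Finset.Ico (m + 1) (T + 1), f n := by
    have h := Finset.card_nsmul_le_sum (Finset.Ico (m + 1) (T + 1)) f (f m)
      (fun n hn => hf.2.2.1 (show m ≤ n by have := (Finset.mem_Ico.mp hn).1; omega))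
    have hcard : (Finset.Ico (m + 1) (T + 1)).card = T - m := by rw [Nat.card_Ico]; omega
    rw [hcard] at h
    have hc : ((T - m : ℕ) : ℝ) = (T : ℝ) - m := by rw [Nat.cast_sub hmT]
    calc ((T : ℝ) - m) * f m = ((T - m : ℕ) : ℝ) * f m := by rw [hc]
      _ ≤ _ := by simpa [nsmul_eq_mul] using h
  have hm' : (1 : ℝ) ≤ m := by exact_mod_cast hm
  have hT' : (m : ℝ) ≤ T := Nat.cast_le.mpr hmT
  rw [hsplit]
  nlinarith [mul_le_mul_of_nonneg_left h2 (by positivity : (0:ℝ) ≤ (m : ℝ)),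
    mul_le_mul_of_nonneg_left h1 (by linarith : (0:ℝ) ≤ (T : ℝ) - m)]

lemma OPT_nonneg {k : ℕ} (f : Fin k → ℕ → ℝ) (hf : ∀ i, IsRewardFn (f i)) (T : ℕ) :
    0 ≤ OPT f T := by
  apply Real.sSup_nonneg
  rintro x ⟨M, hM, rfl⟩
  exact Finset.sum_nonneg fun i _ => Rew_nonneg (hf i) _

lemma OPT_bdd {k : ℕ} (f : Fin k → ℕ → ℝ) (hf : ∀ i, IsRewardFn (f i)) (T : ℕ) :
    BddAbove {x : ℝ | ∃ M : Fin k → ℕ, (∑ i, M i) = T ∧ x = ∑ i, Rew (f i) (M i)} := by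
  refine ⟨T, ?_⟩
  rintro x ⟨M, hM, rfl⟩
  calc ∑ i, Rew (f i) (M i) ≤ ∑ i, (M i : ℝ) :=
        Finset.sum_le_sum fun i _ => Rew_le (hf i) _
    _ = ((∑ i, M i : ℕ) : ℝ) := by rw [Nat.cast_sum]
    _ = T := by rw [hM]

lemma Rew_le_OPT {k : ℕ} (f : Fin k → ℕ → ℝ) (hf : ∀ i, IsRewardFn (f i)) (N : ℕ) (i : Fin k) :
    Rew (f i) N ≤ OPT f N := by
  apply le_csSup (OPT_bdd f hf N)
  refine ⟨fun j => if j = i then N else 0, ?_, ?_⟩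
  · simp
  · symm
    rw [Finset.sum_eq_single i]
    · simp
    · intro j _ hj; simp [hj, Rew_zero]
    · intro h; exact absurd (Finset.mem_univ i) h

/-- For `T ≥ 4` and `1 ≤ N ≤ T/2`, the offline optima satisfy
`25T² · OPT(I,N) ≥ 16N² · OPT(I,T)`. -/
theorem opt_ratio_small (k : ℕ) (hk : 0 < k) (f : Fin k → ℕ → ℝ)
    (hf : ∀ i, IsRewardFn (f i)) (N T : ℕ)
    (hT : 4 ≤ T) (hNlow : 1 ≤ N) (hNhigh : 2 * N ≤ T) :
    16 * (N : ℝ) ^ 2 * OPT f T ≤ 25 * (T : ℝ) ^ 2 * OPT f N := by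
  have hOPTN := OPT_nonneg f hf N
  have hN' : (1 : ℝ) ≤ N := by exact_mod_cast hNlow
  have hT' : (4 : ℝ) ≤ T := by exact_mod_cast hT
  have h2NT : 2 * (N : ℝ) ≤ T := by exact_mod_cast hNhigh
  have hNT : N ≤ T := by omega
  have hTpos : (0 : ℝ) < T := by linarith
  have key : ∀ x ∈ {x : ℝ | ∃ M : Fin k → ℕ, (∑ i, M i) = T ∧ x = ∑ i, Rew (f i) (M i)},
      16 * (N : ℝ) ^ 2 * x ≤ 25 * (T : ℝ) ^ 2 * OPT f N := by
    rintro x ⟨M, hM, rfl⟩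
    have hx0 : 0 ≤ ∑ i, Rew (f i) (M i) :=
      Finset.sum_nonneg fun i _ => Rew_nonneg (hf i) _
    have hMi : ∀ i, M i ≤ T := fun i =>
      hM ▸ Finset.single_le_sum (fun j _ => Nat.zero_le _) (Finset.mem_univ i)
    have step1 : (T : ℝ) * (∑ i, Rew (f i) (M i)) ≤ ∑ i, (M i : ℝ) * Rew (f i) T := by
      rw [Finset.mul_sum]
      exact Finset.sum_le_sum fun i _ => rew_avg (hf i) (hMi i)
    have step2 : ∀ i, (N : ℝ) * ((N : ℝ) + 1) * Rew (f i) T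
        ≤ (T : ℝ) * ((T : ℝ) + 1) * OPT f N := fun i =>
      (rew_ratio (hf i) hNlow hNT).trans
        (mul_le_mul_of_nonneg_left (Rew_le_OPT f hf N i) (by positivity))
    have step3 : (T : ℝ) * ((N : ℝ) * ((N : ℝ) + 1) * (∑ i, Rew (f i) (M i)))
        ≤ (T : ℝ) * ((T : ℝ) * ((T : ℝ) + 1) * OPT f N) := by
      calc (T : ℝ) * ((N : ℝ) * ((N : ℝ) + 1) * (∑ i, Rew (f i) (M i)))
          = (N : ℝ) * ((N : ℝ) + 1) * ((T : ℝ) * ∑ i, Rew (f i) (M i)) := by ring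
        _ ≤ (N : ℝ) * ((N : ℝ) + 1) * ∑ i, (M i : ℝ) * Rew (f i) T :=
            mul_le_mul_of_nonneg_left step1 (by positivity)
        _ = ∑ i, (M i : ℝ) * ((N : ℝ) * ((N : ℝ) + 1) * Rew (f i) T) := by
            rw [Finset.mul_sum]; exact Finset.sum_congr rfl fun i _ => by ring
        _ ≤ ∑ i, (M i : ℝ) * ((T : ℝ) * ((T : ℝ) + 1) * OPT f N) :=
            Finset.sum_le_sum fun i _ =>
              mul_le_mul_of_nonneg_left (step2 i) (by positivity)
        _ = (∑ i, (M i : ℝ)) * ((T : ℝ) * ((T : ℝ) + 1) * OPT f N) := by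
            rw [Finset.sum_mul]
        _ = (T : ℝ) * ((T : ℝ) * ((T : ℝ) + 1) * OPT f N) := by
            rw [← Nat.cast_sum, hM]
    have h1 : (N : ℝ) * ((N : ℝ) + 1) * (∑ i, Rew (f i) (M i))
        ≤ (T : ℝ) * ((T : ℝ) + 1) * OPT f N := le_of_mul_le_mul_left step3 hTpos
    have ha : 16 * (N : ℝ) * ((T : ℝ) + 1) ≤ 25 * (T : ℝ) * ((N : ℝ) + 1) := by
      nlinarith [mul_nonneg (by positivity : (0:ℝ) ≤ (N : ℝ)) (by positivity : (0:ℝ) ≤ (T : ℝ))]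
    have hN1 : (0 : ℝ) < (N : ℝ) + 1 := by linarith
    nlinarith [mul_le_mul_of_nonneg_left h1 (by positivity : (0:ℝ) ≤ 16 * (N : ℝ)),
      mul_le_mul_of_nonneg_right ha (mul_nonneg hTpos.le hOPTN), hx0, hOPTN, hN1]
  have hsup : OPT f T ≤ (25 * (T : ℝ) ^ 2 * OPT f N) / (16 * (N : ℝ) ^ 2) := by
    apply Real.sSup_le
    · intro x hx
      rw [le_div_iff₀ (by positivity : (0:ℝ) < 16 * (N : ℝ) ^ 2)]
      nlinarith [key x hx]
    · exact div_nonneg (mul_nonneg (by positivity) hOPTN) (by positivity)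
  have h16 : (0 : ℝ) < 16 * (N : ℝ) ^ 2 := by positivity
  calc 16 * (N : ℝ) ^ 2 * OPT f T
      ≤ 16 * (N : ℝ) ^ 2 * ((25 * (T : ℝ) ^ 2 * OPT f N) / (16 * (N : ℝ) ^ 2)) :=
        mul_le_mul_of_nonneg_left hsup h16.le
    _ = 25 * (T : ℝ) ^ 2 * OPT f N := by field_simp
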